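/- Let H be a real Hilbert space, C ⊆ H nonempty closed convex. Suppose each f_i (i = 1,…,N) satisfies (A1)–(A4), each A_k : C → H (k = 1,…,K) is α-inverse strongly monotone, each S_j (j = 1,…,M) is asymptotically κ-strictly pseudocontractive with sequence {k_n} ⊆ [1,∞), k_n → 1, the parameters satisfy 0 < α_n < 1 with limsup α_n < 1, κ ≤ β_n ≤ b < 1, 0 < d ≤ r_n ≤ e < 2α, and F = (∩_{i=1}^N EP(f_i,C)) ∩ (∩_{k=1}^K VI(A_k,C)) ∩ (∩_{j=1}^M F(S_j)) is nonempty and bounded with F ⊆ {v : ‖v‖ ≤ ω}. Let x_0 ∈ C, C_0 = C, and for n ≥ 0: y_n^i ∈ C satisfies f_i(y_n^i, y) + (1/r_n)⟨y − y_n^i, y_n^i − x_n⟩ ≥ 0 for all y ∈ C (i = 1,…,N); y_n^{N+k} = P_C(x_n − r_n A_k x_n) (k = 1,…,K); i_n maximizes ‖y_n^i − x_n‖ over i = 1,…,N+K and ȳ_n = y_n^{i_n}; z_n^j = α_n x_n + (1−α_n)(β_n ȳ_n + (1−β_n) S_j^n ȳ_n); j_n maximizes ‖z_n^j − x_n‖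 and z̄_n = z_n^{j_n}; C_{n+1} = {v ∈ C_n : ‖z̄_n − v‖² ≤ ‖x_n − v‖² + ε_n} with ε_n = (k_n − 1)(‖x_n‖ + ω)²; x_{n+1} = P_{C_{n+1}} x_0. Then {x_n} converges strongly to P_F x_0. -/

import Mathlib

/-!
Every `p ∈ F` satisfies the Fejér-type estimate
`‖z̄ₙ - p‖² ≤ kₙ ‖xₙ - p‖² - (1 - αₙ) c ‖ȳₙ - xₙ‖²` with `c = 1 - e / (2α) > 0`, coming from the
resolvent and gradient-projection steps and from the strict pseudocontractivity of `Sⱼⁿ` at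
fixed points; since `‖xₙ - p‖ ≤ ‖xₙ‖ + ω`, this puts `F` inside every `Cₙ`.
As `xₙ = P_{Cₙ} x₀` for nested convex sets, `‖xₙ - x₀‖` increases and is bounded by `‖p - x₀‖`,
and `‖xₘ - xₙ‖² ≤ ‖xₘ - x₀‖² - ‖xₙ - x₀‖²` for `m ≥ n` makes `(xₙ)` Cauchy, with limit `q`.
Then `xₙ₊₁ ∈ Cₙ₊₁` and `εₙ → 0` give `z̄ₙ → q`, the Fejér estimate forces `ȳₙ - xₙ → 0`, so
every `yₙⁱ → q` and `Sⱼⁿ ȳₙ - ȳₙ → 0`. Passing to the limit in the resolvent inequalities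
(lower semicontinuity and Minty's argument), in the projection inequalities, and in the
uniformly Lipschitz iterates `Sⱼⁿ` shows `q ∈ F`; finally `q = P_F x₀` because `F ⊆ Cₙ`.
-/

open scoped RealInnerProductSpace
open Filter Topology

def IsProjOn {H : Type*} [NormedAddCommGroup H] (K : Set H) (x p : H) : Prop :=
  p ∈ K ∧ ∀ v ∈ K, ‖p - x‖ ≤ ‖v - x‖

section Sequences

variable {α E : Type*} [SeminormedAddCommGroup E] {l : Filter α}

theorem Filter.Tendsto.of_norm_sub_le {f g : α → E} {c : E} {ε : α → ℝ}
    (hg : Tendsto g l (𝓝 c)) (hε : Tendsto ε l (𝓝 0)) (h : ∀ a, ‖f a - g a‖ ≤ ε a) :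
    Tendsto f l (𝓝 c) := by
  simpa using (squeeze_zero_norm h hε).add hg

theorem Filter.Tendsto.of_sub_nhds_zero {f g : α → E} {c : E} (hg : Tendsto g l (𝓝 c))
    (h : Tendsto (fun a => f a - g a) l (𝓝 0)) : Tendsto f l (𝓝 c) := by
  simpa using h.add hg

theorem tendsto_zero_of_mul_norm_le {u : α → E} {s : α → ℝ} {γ : ℝ} (hγ : 0 < γ)
    (h : ∀ᶠ a in l, γ * ‖u a‖ ≤ s a) (hs : Tendsto s l (𝓝 0)) : Tendsto u l (𝓝 0) := by
  refine squeeze_zero_norm' (h.mono fun a ha => ?_) (by simpa using hs.div_const γ)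
  rwa [le_div_iff₀' hγ]

theorem tendsto_zero_of_mul_norm_sq_le {u : α → E} {s : α → ℝ} {γ : ℝ} (hγ : 0 < γ)
    (h : ∀ᶠ a in l, γ * ‖u a‖ ^ 2 ≤ s a) (hs : Tendsto s l (𝓝 0)) : Tendsto u l (𝓝 0) := by
  refine squeeze_zero_norm' (h.mono fun a ha => ?_)
    (by simpa using (hs.div_const γ).sqrt)
  rw [Real.le_sqrt (norm_nonneg _) (div_nonneg ((by positivity : 0 ≤ γ * ‖u a‖ ^ 2).trans ha)
    hγ.le), le_div_iff₀' hγ]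
  exact ha

theorem tendsto_inv_smul_nhds_zero [NormedSpace ℝ E] {u : α → E} {r : α → ℝ} {d : ℝ}
    (hd : 0 < d) (hr : ∀ a, d ≤ r a) (hu : Tendsto u l (𝓝 0)) :
    Tendsto (fun a => (r a)⁻¹ • u a) l (𝓝 0) := by
  refine tendsto_zero_of_mul_norm_le hd (Eventually.of_forall fun a => ?_)
    (tendsto_norm_zero.comp hu)
  have hra : 0 < r a := hd.trans_le (hr a)
  rw [norm_smul, norm_inv, Real.norm_of_nonneg hra.le, Function.comp_apply, ← mul_assoc,
    ← div_eq_mul_inv]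
  exact mul_le_of_le_one_left (norm_nonneg _) ((div_le_one hra).mpr (hr a))

end Sequences

theorem exists_pos_eventually_le_one_sub {α : Type*} {l : Filter α} {a : α → ℝ}
    (ha : limsup a l < 1) (hbdd : ∀ n, a n ≤ 1) : ∃ δ > 0, ∀ᶠ n in l, δ ≤ 1 - a n := by
  obtain ⟨b, hab, hb1⟩ := exists_between ha
  exact ⟨1 - b, by linarith,
    (eventually_lt_of_limsup_lt hab (isBoundedUnder_of ⟨1, hbdd⟩)).mono fun n hn => by linarith⟩

theorem Filter.limsup_nonneg_of_eventually_nonneg {α : Type*} {l : Filter α} [l.NeBot]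
    {u : α → ℝ} (h : ∀ᶠ a in l, 0 ≤ u a) : 0 ≤ limsup u l := by
  -- no boundedness is needed: if `u` is not eventually bounded above, the limsup is `sInf ∅ = 0`
  rw [limsup_eq]
  refine Real.sInf_nonneg fun b hb => ?_
  obtain ⟨a, ha, hab⟩ := (h.and hb).exists
  exact ha.trans hab

theorem LowerSemicontinuousOn.le_of_tendsto {α β : Type*} [TopologicalSpace α] {l : Filter β}
    [l.NeBot] {g : α → ℝ} {C : Set α} (hg : LowerSemicontinuousOn g C) {y : β → α} {q : α}
    (hq : q ∈ C) (hy : ∀ n, y n ∈ C) (hlim : Tendsto y l (𝓝 q)) {b : β → ℝ} {c : ℝ}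
    (hb : Tendsto b l (𝓝 c)) (hle : ∀ n, g (y n) ≤ b n) : g q ≤ c := by
  by_contra! hlt
  have hgy : ∀ᶠ n in l, (c + g q) / 2 < g (y n) :=
    (tendsto_nhdsWithin_iff.2 ⟨hlim, Eventually.of_forall hy⟩).eventually
      (hg q hq _ (by linarith))
  have hby : ∀ᶠ n in l, b n < (c + g q) / 2 := hb.eventually_lt_const (by linarith)
  obtain ⟨n, h1, h2⟩ := (hgy.and hby).exists
  linarith [hle n]

section InnerProductSpace

variable {H : Type*} [NormedAddCommGroup H] [InnerProductSpace ℝ H]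

theorem norm_smul_add_one_sub_smul_sub_sq (t : ℝ) (u v w : H) :
    ‖t • u + (1 - t) • v - w‖ ^ 2
      = t * ‖u - w‖ ^ 2 + (1 - t) * ‖v - w‖ ^ 2 - t * (1 - t) * ‖u - v‖ ^ 2 := by
  have hsq : ∀ y : H, ‖y‖ ^ 2 = ⟪y, y⟫ := fun y => (real_inner_self_eq_norm_sq y).symm
  simp only [hsq, inner_add_left, inner_add_right, inner_sub_left, inner_sub_right,
    real_inner_smul_left, real_inner_smul_right, real_inner_comm u v, real_inner_comm u w,
    real_inner_comm v w]
  ring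

theorem IsProjOn.inner_sub_nonpos {K : Set H} (hK : Convex ℝ K) {x p v : H} (h : IsProjOn K x p)
    (hv : v ∈ K) : ⟪x - p, v - p⟫ ≤ 0 := by
  have : Nonempty K := ⟨⟨p, h.1⟩⟩
  refine (norm_eq_iInf_iff_real_inner_le_zero hK h.1).1 (le_antisymm (le_ciInf fun w => ?_)
    (ciInf_le (f := fun w : K => ‖x - w‖) ⟨0, ?_⟩ ⟨p, h.1⟩)) v hv
  · rw [norm_sub_rev x p, norm_sub_rev x w]
    exact h.2 w w.2
  · rintro _ ⟨w, rfl⟩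
    exact norm_nonneg _

theorem IsProjOn.norm_sub_sq_le {K : Set H} (hK : Convex ℝ K) {x p v : H} (h : IsProjOn K x p)
    (hv : v ∈ K) : ‖v - p‖ ^ 2 ≤ ‖v - x‖ ^ 2 - ‖p - x‖ ^ 2 := by
  have hinner : ⟪v - p, p - x⟫ = -⟪x - p, v - p⟫ := by
    rw [real_inner_comm, ← inner_neg_left, neg_sub]
  have hexp : ‖v - x‖ ^ 2 = ‖v - p‖ ^ 2 + 2 * ⟪v - p, p - x⟫ + ‖p - x‖ ^ 2 := by
    rw [← norm_add_sq_real, sub_add_sub_cancel]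
  linarith [h.inner_sub_nonpos hK hv]

theorem convex_sep_norm_sub_sq_le {K : Set H} (hK : Convex ℝ K) (z x : H) (ε : ℝ) :
    Convex ℝ {v ∈ K | ‖z - v‖ ^ 2 ≤ ‖x - v‖ ^ 2 + ε} := by
  have hhalf : {v | ‖z - v‖ ^ 2 ≤ ‖x - v‖ ^ 2 + ε}
      = {v | innerₛₗ ℝ (x - z) v ≤ (‖x‖ ^ 2 - ‖z‖ ^ 2 + ε) / 2} := by
    ext v
    simp only [Set.mem_ofPred_eq, innerₛₗ_apply_apply, norm_sub_sq_real, inner_sub_left]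
    constructor <;> intro h <;> linarith
  have := convex_halfSpace_le (innerₛₗ ℝ (x - z)).isLinear ((‖x‖ ^ 2 - ‖z‖ ^ 2 + ε) / 2)
  rw [← hhalf] at this
  exact hK.inter this

theorem norm_smul_add_one_sub_smul_sub_sq_le_of_pseudocontractive {u w p : H} {k κ β : ℝ}
    (hk : 1 ≤ k) (hκ : 0 ≤ κ) (hκβ : κ ≤ β) (hβ : β ≤ 1)
    (h : ‖w - p‖ ^ 2 ≤ k * ‖u - p‖ ^ 2 + κ * ‖u - w‖ ^ 2) :
    ‖β • u + (1 - β) • w - p‖ ^ 2 ≤ k * ‖u - p‖ ^ 2 := by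
  rw [norm_smul_add_one_sub_smul_sub_sq]
  nlinarith [mul_le_mul_of_nonneg_left h (sub_nonneg.2 hβ),
    mul_nonneg (mul_nonneg (sub_nonneg.2 hβ) (sub_nonneg.2 hκβ)) (sq_nonneg ‖u - w‖),
    mul_nonneg (mul_nonneg (hκ.trans hκβ) (sub_nonneg.2 hk)) (sq_nonneg ‖u - p‖)]

theorem norm_smul_add_one_sub_smul_sub_sq_le_sub_of_le {x y t p : H} {a k c : ℝ} (ha0 : 0 ≤ a)
    (ha1 : a ≤ 1) (hk : 1 ≤ k) (hc : 0 ≤ c) (ht : ‖t - p‖ ^ 2 ≤ k * ‖y - p‖ ^ 2)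
    (hy : ‖y - p‖ ^ 2 ≤ ‖x - p‖ ^ 2 - c * ‖y - x‖ ^ 2) :
    ‖a • x + (1 - a) • t - p‖ ^ 2 ≤ k * ‖x - p‖ ^ 2 - (1 - a) * c * ‖y - x‖ ^ 2 := by
  rw [norm_smul_add_one_sub_smul_sub_sq]
  have h1a : 0 ≤ 1 - a := sub_nonneg.2 ha1
  nlinarith [mul_le_mul_of_nonneg_left ht h1a,
    mul_le_mul_of_nonneg_left hy (mul_nonneg h1a (zero_le_one.trans hk)),
    mul_nonneg (mul_nonneg ha0 h1a) (sq_nonneg ‖x - t‖),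
    mul_nonneg (mul_nonneg ha0 (sub_nonneg.2 hk)) (sq_nonneg ‖x - p‖),
    mul_nonneg (mul_nonneg (mul_nonneg h1a (sub_nonneg.2 hk)) hc) (sq_nonneg ‖y - x‖)]

end InnerProductSpace

section HybridMethod

variable {H : Type*} [NormedAddCommGroup H] {D : ℕ → Set H} {u : H} {x z : ℕ → H} {ε : ℕ → ℝ}

theorem isProjOn_of_tendsto {F : Set H} {q : H} (hx : ∀ n, IsProjOn (D n) u (x n))
    (hFD : ∀ n, F ⊆ D n) (hq : q ∈ F) (hlim : Tendsto x atTop (𝓝 q)) : IsProjOn F u q :=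
  ⟨hq, fun v hv => le_of_tendsto' (hlim.sub_const u).norm fun n => (hx n).2 v (hFD n hv)⟩

theorem antitone_of_succ_eq_sep
    (hD : ∀ n, D (n + 1) = {v ∈ D n | ‖z n - v‖ ^ 2 ≤ ‖x n - v‖ ^ 2 + ε n}) : Antitone D :=
  antitone_nat_of_succ_le fun n v hv => by
    rw [hD n] at hv
    exact hv.1

theorem subset_of_succ_eq_sep
    (hD : ∀ n, D (n + 1) = {v ∈ D n | ‖z n - v‖ ^ 2 ≤ ‖x n - v‖ ^ 2 + ε n})
    {F : Set H} (h0 : F ⊆ D 0) (hF : ∀ n, ∀ p ∈ F, ‖z n - p‖ ^ 2 ≤ ‖x n - p‖ ^ 2 + ε n) :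
    ∀ n, F ⊆ D n
  | 0 => h0
  | n + 1 => fun p hp => by
    rw [hD n]
    exact ⟨subset_of_succ_eq_sep hD h0 hF n hp, hF n p hp⟩

theorem tendsto_of_norm_sub_succ_sq_le {q : H} (hx : Tendsto x atTop (𝓝 q))
    (hε : Tendsto ε atTop (𝓝 0)) (h : ∀ n, ‖z n - x (n + 1)‖ ^ 2 ≤ ‖x n - x (n + 1)‖ ^ 2 + ε n) :
    Tendsto z atTop (𝓝 q) := by
  have hshift := hx.comp (tendsto_add_atTop_nat 1)
  have hgap : Tendsto (fun n => z n - x (n + 1)) atTop (𝓝 0) :=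
    tendsto_zero_of_mul_norm_sq_le one_pos
      (Eventually.of_forall fun n => (one_mul _).trans_le (h n))
      (by simpa using ((hx.sub hshift).norm.pow 2).add hε)
  exact hshift.of_sub_nhds_zero hgap

variable [InnerProductSpace ℝ H]

theorem convex_of_succ_eq_sep
    (hD : ∀ n, D (n + 1) = {v ∈ D n | ‖z n - v‖ ^ 2 ≤ ‖x n - v‖ ^ 2 + ε n})
    (h0 : Convex ℝ (D 0)) : ∀ n, Convex ℝ (D n)
  | 0 => h0
  | n + 1 => hD n ▸ convex_sep_norm_sub_sq_le (convex_of_succ_eq_sep hD h0 n) (z n) (x n) (ε n)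

theorem cauchySeq_of_isProjOn_antitone (hD : Antitone D) (hconv : ∀ n, Convex ℝ (D n))
    (hx : ∀ n, IsProjOn (D n) u (x n)) {p : H} (hp : ∀ n, p ∈ D n) : CauchySeq x := by
  set s : ℕ → ℝ := fun n => ‖x n - u‖ ^ 2
  have hgap : ∀ {n m}, n ≤ m → ‖x m - x n‖ ^ 2 ≤ s m - s n := fun hnm =>
    (hx _).norm_sub_sq_le (hconv _) (hD hnm (hx _).1)
  have hs : Monotone s := fun n m hnm => by linarith [hgap hnm, sq_nonneg ‖x m - x n‖]
  have hbdd : BddAbove (Set.range s) := ⟨‖p - u‖ ^ 2, by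
    rintro _ ⟨n, rfl⟩
    exact pow_le_pow_left₀ (norm_nonneg _) ((hx n).2 p (hp n)) 2⟩
  rw [Metric.cauchySeq_iff']
  intro δ hδ
  obtain ⟨N, hN⟩ := Metric.cauchySeq_iff'.1 (tendsto_atTop_ciSup hs hbdd).cauchySeq (δ ^ 2)
    (by positivity)
  refine ⟨N, fun n hn => ?_⟩
  have hsq : ‖x n - x N‖ ^ 2 < δ ^ 2 :=
    (hgap hn).trans_lt ((le_abs_self _).trans_lt (hN n hn))
  rw [dist_eq_norm]
  exact lt_of_pow_lt_pow_left₀ 2 hδ.le hsq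

end HybridMethod

section Equilibrium

variable {H : Type*} [NormedAddCommGroup H] [InnerProductSpace ℝ H] {g : H → H → ℝ} {C : Set H}

def IsResolvent (g : H → H → ℝ) (C : Set H) (r : ℝ) (x y : H) : Prop :=
  y ∈ C ∧ ∀ w ∈ C, 0 ≤ g y w + (1 / r) * ⟪w - y, y - x⟫

theorem IsResolvent.norm_sub_sq_le {r : ℝ} {x y p : H} (hy : IsResolvent g C r x y) (hr : 0 < r)
    (hA2 : ∀ u ∈ C, ∀ v ∈ C, g u v + g v u ≤ 0) (hp : p ∈ C) (hpEP : ∀ w ∈ C, 0 ≤ g p w) :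
    ‖y - p‖ ^ 2 ≤ ‖x - p‖ ^ 2 - ‖y - x‖ ^ 2 := by
  have hres := hy.2 p hp
  have hmono : g y p ≤ 0 := by linarith [hA2 y hy.1 p hp, hpEP y hy.1]
  have hinner : 0 ≤ ⟪p - y, y - x⟫ :=
    nonneg_of_mul_nonneg_right (by linarith : 0 ≤ 1 / r * ⟪p - y, y - x⟫) (one_div_pos.2 hr)
  have hexp : ‖x - p‖ ^ 2 = ‖y - x‖ ^ 2 + 2 * ⟪p - y, y - x⟫ + ‖y - p‖ ^ 2 := by
    rw [show x - p = -(y - x) + -(p - y) by abel, norm_add_sq_real, inner_neg_neg,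
      real_inner_comm, norm_neg, norm_neg, norm_sub_rev p y]
  linarith

theorem forall_nonneg_of_forall_le_zero (hC : Convex ℝ C) (hA1 : ∀ x ∈ C, g x x = 0)
    (hA3 : ∀ x ∈ C, ∀ y ∈ C, ∀ z ∈ C,
      limsup (fun t : ℝ => g (t • z + (1 - t) • x) y) (𝓝[>] 0) ≤ g x y)
    (hA4 : ∀ x ∈ C, ConvexOn ℝ C (g x)) {q : H} (hq : q ∈ C) (h : ∀ u ∈ C, g u q ≤ 0) :
    ∀ w ∈ C, 0 ≤ g q w := by
  intro w hw
  have hseg : ∀ t ∈ Set.Ioo (0 : ℝ) 1, 0 ≤ g (t • w + (1 - t) • q) w := by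
    rintro t ⟨ht0, ht1⟩
    have hwt : t • w + (1 - t) • q ∈ C := hC hw hq ht0.le (by linarith) (by ring)
    have hconv := (hA4 _ hwt).2 hw hq ht0.le (by linarith : (0 : ℝ) ≤ 1 - t) (by ring)
    rw [hA1 _ hwt, smul_eq_mul, smul_eq_mul] at hconv
    nlinarith [h _ hwt]
  refine le_trans (limsup_nonneg_of_eventually_nonneg ?_) (hA3 q hq w hw w hw)
  filter_upwards [Ioo_mem_nhdsGT (zero_lt_one' ℝ)] using hseg

theorem forall_nonneg_of_tendsto_resolvent (hC : Convex ℝ C) (hA1 : ∀ x ∈ C, g x x = 0)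
    (hA2 : ∀ x ∈ C, ∀ y ∈ C, g x y + g y x ≤ 0)
    (hA3 : ∀ x ∈ C, ∀ y ∈ C, ∀ z ∈ C,
      limsup (fun t : ℝ => g (t • z + (1 - t) • x) y) (𝓝[>] 0) ≤ g x y)
    (hA4conv : ∀ x ∈ C, ConvexOn ℝ C (g x)) (hA4lsc : ∀ x ∈ C, LowerSemicontinuousOn (g x) C)
    {x y : ℕ → H} {r : ℕ → ℝ} {d : ℝ} (hd : 0 < d) (hr : ∀ n, d ≤ r n)
    (hy : ∀ n, IsResolvent g C (r n) (x n) (y n)) {q : H} (hq : q ∈ C)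
    (hxq : Tendsto x atTop (𝓝 q)) (hyx : Tendsto (fun n => y n - x n) atTop (𝓝 0)) :
    ∀ w ∈ C, 0 ≤ g q w := by
  have hyq : Tendsto y atTop (𝓝 q) := hxq.of_sub_nhds_zero hyx
  refine forall_nonneg_of_forall_le_zero hC hA1 hA3 hA4conv hq fun u hu => ?_
  have hbound : ∀ n, g u (y n) ≤ ⟪u - y n, (r n)⁻¹ • (y n - x n)⟫ := fun n => by
    rw [real_inner_smul_right, ← one_div]
    linarith [(hy n).2 u hu, hA2 (y n) (hy n).1 u hu]
  have hlim : Tendsto (fun n => ⟪u - y n, (r n)⁻¹ • (y n - x n)⟫) atTop (𝓝 0) := by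
    simpa using (tendsto_const_nhds.sub hyq).inner (tendsto_inv_smul_nhds_zero hd hr hyx)
  exact (hA4lsc u hu).le_of_tendsto hq (fun n => (hy n).1) hyq hlim hbound

end Equilibrium

section VariationalInequality

variable {H : Type*} [NormedAddCommGroup H] [InnerProductSpace ℝ H] {A : H → H} {C : Set H}
  {α : ℝ}

def IsInverseStronglyMonotoneOn (A : H → H) (C : Set H) (α : ℝ) : Prop :=
  ∀ x ∈ C, ∀ y ∈ C, α * ‖A x - A y‖ ^ 2 ≤ ⟪A x - A y, x - y⟫

theorem IsInverseStronglyMonotoneOn.mul_norm_sub_le (hA : IsInverseStronglyMonotoneOn A C α)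
    {x y : H} (hx : x ∈ C) (hy : y ∈ C) : α * ‖A x - A y‖ ≤ ‖x - y‖ := by
  rcases (norm_nonneg (A x - A y)).eq_or_lt with h0 | hpos
  · rw [← h0, mul_zero]
    exact norm_nonneg _
  · refine le_of_mul_le_mul_right ?_ hpos
    nlinarith [hA x hx y hy, real_inner_le_norm (A x - A y) (x - y)]

theorem IsInverseStronglyMonotoneOn.tendsto (hA : IsInverseStronglyMonotoneOn A C α)
    (hα : 0 < α) {x : ℕ → H} (hx : ∀ n, x n ∈ C) {q : H} (hq : q ∈ C)
    (hlim : Tendsto x atTop (𝓝 q)) : Tendsto (fun n => A (x n)) atTop (𝓝 (A q)) := by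
  refine tendsto_const_nhds.of_norm_sub_le (ε := fun n => ‖x n - q‖ / α)
    (by simpa using ((hlim.sub_const q).norm.div_const α)) fun n => ?_
  rw [le_div_iff₀' hα]
  exact hA.mul_norm_sub_le (hx n) hq

theorem IsProjOn.norm_sub_sq_le_of_isInverseStronglyMonotoneOn {r : ℝ} {x y p : H}
    (hy : IsProjOn C (x - r • A x) y) (hC : Convex ℝ C) (hA : IsInverseStronglyMonotoneOn A C α)
    (hα : 0 < α) (hr : 0 ≤ r) (hx : x ∈ C) (hp : p ∈ C) (hpVI : ∀ w ∈ C, 0 ≤ ⟪A p, w - p⟫) :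
    ‖y - p‖ ^ 2 ≤ ‖x - p‖ ^ 2 - (1 - r / (2 * α)) * ‖y - x‖ ^ 2 := by
  set D := A x - A p
  have hproj := hy.inner_sub_nonpos hC hp
  have hVI := hpVI y hy.1
  have hcoer := hA x hx p hp
  have hstep : ‖y - p‖ ^ 2
      ≤ ‖x - p‖ ^ 2 - ‖x - y‖ ^ 2 - 2 * r * ⟪D, x - p⟫ + 2 * r * ⟪D, x - y⟫ := by
    simp only [D, inner_sub_left, inner_sub_right, real_inner_smul_left, norm_sub_sq_real]
      at hproj hVI ⊢
    linarith [real_inner_self_eq_norm_sq y, real_inner_comm x y, real_inner_comm y p,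
      real_inner_comm (A x) y, real_inner_comm (A x) p, mul_nonneg hr hVI]
  have hamgm : 2 * r * (‖D‖ * ‖x - y‖) ≤ 2 * r * α * ‖D‖ ^ 2 + r / (2 * α) * ‖x - y‖ ^ 2 := by
    have hsq := mul_nonneg (div_nonneg hr (by positivity : 0 ≤ 2 * α))
      (sq_nonneg (‖x - y‖ - 2 * α * ‖D‖))
    have hexp : r / (2 * α) * (‖x - y‖ - 2 * α * ‖D‖) ^ 2 = r / (2 * α) * ‖x - y‖ ^ 2
        - 2 * r * (‖D‖ * ‖x - y‖) + 2 * r * α * ‖D‖ ^ 2 := by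
      field_simp
      ring
    linarith
  rw [norm_sub_rev y x]
  nlinarith [mul_le_mul_of_nonneg_left hcoer (by positivity : 0 ≤ 2 * r),
    mul_le_mul_of_nonneg_left (real_inner_le_norm D (x - y)) (by positivity : 0 ≤ 2 * r),
    real_inner_comm D (x - p)]

theorem forall_inner_nonneg_of_tendsto_proj (hC : Convex ℝ C)
    (hA : IsInverseStronglyMonotoneOn A C α) (hα : 0 < α) {x y : ℕ → H} {r : ℕ → ℝ} {d : ℝ}
    (hd : 0 < d) (hr : ∀ n, d ≤ r n) (hy : ∀ n, IsProjOn C (x n - r n • A (x n)) (y n))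
    (hx : ∀ n, x n ∈ C) {q : H} (hq : q ∈ C) (hxq : Tendsto x atTop (𝓝 q))
    (hyx : Tendsto (fun n => y n - x n) atTop (𝓝 0)) : ∀ w ∈ C, 0 ≤ ⟪A q, w - q⟫ := by
  intro w hw
  have hyq : Tendsto y atTop (𝓝 q) := hxq.of_sub_nhds_zero hyx
  have hineq : ∀ n, 0 ≤ ⟪A (x n) + (r n)⁻¹ • (y n - x n), w - y n⟫ := fun n => by
    have hrn : 0 < r n := hd.trans_le (hr n)
    have hproj := (hy n).inner_sub_nonpos hC hw
    rw [show x n - r n • A (x n) - y n = -(r n • (A (x n) + (r n)⁻¹ • (y n - x n))) by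
      rw [smul_add, smul_inv_smul₀ hrn.ne']; abel, inner_neg_left, real_inner_smul_left] at hproj
    nlinarith
  have hlim : Tendsto (fun n => ⟪A (x n) + (r n)⁻¹ • (y n - x n), w - y n⟫) atTop
      (𝓝 ⟪A q, w - q⟫) := by
    simpa using ((hA.tendsto hα hx hq hxq).add (tendsto_inv_smul_nhds_zero hd hr hyx)).inner
      (tendsto_const_nhds.sub hyq)
  exact ge_of_tendsto' hlim hineq

end VariationalInequality

section StrictPseudocontraction

variable {H : Type*} [NormedAddCommGroup H] {T : H → H} {C : Set H}
  {κ : ℝ} {k : ℕ → ℝ}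

def IsAsymptoticallyStrictPseudocontractiveOn (T : H → H) (C : Set H) (κ : ℝ) (k : ℕ → ℝ) :
    Prop :=
  ∀ n, 1 ≤ n → ∀ x ∈ C, ∀ y ∈ C,
    ‖T^[n] x - T^[n] y‖ ^ 2 ≤ k n * ‖x - y‖ ^ 2 + κ * ‖(x - T^[n] x) - (y - T^[n] y)‖ ^ 2

theorem IsAsymptoticallyStrictPseudocontractiveOn.norm_iterate_sub_sq_le
    (hT : IsAsymptoticallyStrictPseudocontractiveOn T C κ k) {p u : H} (hp : p ∈ C)
    (hfix : T p = p) (hu : u ∈ C) {n : ℕ} (hk : 1 ≤ k n) :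
    ‖T^[n] u - p‖ ^ 2 ≤ k n * ‖u - p‖ ^ 2 + κ * ‖u - T^[n] u‖ ^ 2 := by
  rcases Nat.eq_zero_or_pos n with rfl | hn
  · simp only [Function.iterate_zero_apply, sub_self, norm_zero]
    nlinarith [sq_nonneg ‖u - p‖]
  · simpa [Function.iterate_fixed hfix n] using hT n hn u hu p hp

theorem IsAsymptoticallyStrictPseudocontractiveOn.mul_norm_iterate_sub_le
    (hT : IsAsymptoticallyStrictPseudocontractiveOn T C κ k) (hκ0 : 0 ≤ κ) (hκ1 : κ ≤ 1)
    {n : ℕ} (hn : 1 ≤ n) (hk : 0 ≤ k n) {x y : H} (hx : x ∈ C) (hy : y ∈ C) :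
    (1 - κ) * ‖T^[n] x - T^[n] y‖ ≤ (k n + 3) * ‖x - y‖ := by
  set a := ‖T^[n] x - T^[n] y‖
  set b := ‖x - y‖
  have hsq : a ^ 2 ≤ k n * b ^ 2 + κ * (b + a) ^ 2 := by
    have htri : ‖(x - T^[n] x) - (y - T^[n] y)‖ ≤ b + a := by
      rw [show (x - T^[n] x) - (y - T^[n] y) = (x - y) - (T^[n] x - T^[n] y) by abel]
      exact norm_sub_le _ _
    nlinarith [hT n hn x hx y hy, pow_le_pow_left₀ (norm_nonneg _) htri 2]
  rcases le_or_gt a b with hab | hab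
  · nlinarith [norm_nonneg (T^[n] x - T^[n] y)]
  · have hb : 0 ≤ b := norm_nonneg _
    refine le_of_mul_le_mul_right ?_ (hb.trans_lt hab)
    nlinarith [mul_le_mul_of_nonneg_left hab.le (mul_nonneg hk hb),
      mul_le_mul_of_nonneg_left hab.le (mul_nonneg hκ0 hb),
      mul_nonneg (sub_nonneg.2 hκ1) (mul_nonneg hb (hb.trans hab.le))]

theorem IsAsymptoticallyStrictPseudocontractiveOn.eq_of_tendsto
    (hT : IsAsymptoticallyStrictPseudocontractiveOn T C κ k) (hmaps : Set.MapsTo T C C)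
    (hκ0 : 0 ≤ κ) (hκ1 : κ < 1) (hk : ∀ n, 0 ≤ k n) (hkb : BddAbove (Set.range k))
    {y : ℕ → H} (hy : ∀ n, y n ∈ C) {q : H} (hq : q ∈ C) (hyq : Tendsto y atTop (𝓝 q))
    (hreg : Tendsto (fun n => T^[n] (y n) - y n) atTop (𝓝 0)) : T q = q := by
  obtain ⟨K, hK⟩ := hkb
  set L := (K + 3) / (1 - κ)
  have hLip : ∀ n, 1 ≤ n → ∀ u ∈ C, ∀ v ∈ C, ‖T^[n] u - T^[n] v‖ ≤ L * ‖u - v‖ := by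
    intro n hn u hu v hv
    rw [div_mul_eq_mul_div, le_div_iff₀' (by linarith)]
    nlinarith [hT.mul_norm_iterate_sub_le hκ0 hκ1.le hn (hk n) hu hv,
      mul_le_mul_of_nonneg_right (hK ⟨n, rfl⟩) (norm_nonneg (u - v))]
  have hshift := tendsto_add_atTop_nat 1
  have hiter : Tendsto (fun n => T^[n] (y n)) atTop (𝓝 q) := hyq.of_sub_nhds_zero hreg
  have hnext : Tendsto (fun n => T (T^[n] (y n))) atTop (𝓝 (T q)) :=
    tendsto_const_nhds.of_norm_sub_le (ε := fun n => L * ‖T^[n] (y n) - q‖)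
      (by simpa using (hiter.sub_const q).norm.const_mul L)
      fun n => by simpa using hLip 1 le_rfl _ (hmaps.iterate n (hy n)) q hq
  have hsucc : Tendsto (fun n => T^[n + 1] (y n)) atTop (𝓝 q) :=
    (hiter.comp hshift).of_norm_sub_le (ε := fun n => L * ‖y n - y (n + 1)‖)
      (by simpa using (hyq.sub (hyq.comp hshift)).norm.const_mul L)
      fun n => hLip (n + 1) (by omega) _ (hy n) _ (hy (n + 1))
  simp only [Function.iterate_succ_apply'] at hsucc
  exact tendsto_nhds_unique hnext hsucc

end StrictPseudocontraction

section Regularity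

variable {H : Type*} [NormedAddCommGroup H]

theorem norm_sub_sq_le_add_mul_of_le_mul {z x p : H} {k s ω : ℝ} (hk : 1 ≤ k) (hs : 0 ≤ s)
    (hp : ‖p‖ ≤ ω) (h : ‖z - p‖ ^ 2 ≤ k * ‖x - p‖ ^ 2 - s) :
    ‖z - p‖ ^ 2 ≤ ‖x - p‖ ^ 2 + (k - 1) * (‖x‖ + ω) ^ 2 := by
  have hxp : ‖x - p‖ ≤ ‖x‖ + ω := (norm_sub_le _ _).trans (by linarith)
  nlinarith [mul_le_mul_of_nonneg_left (pow_le_pow_left₀ (norm_nonneg _) hxp 2) (sub_nonneg.2 hk)]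

theorem tendsto_sub_nhds_zero_of_norm_sub_sq_le {x y z : ℕ → H} {p q : H} {k γ : ℕ → ℝ} {δ : ℝ}
    (hδ : 0 < δ) (hγ : ∀ᶠ n in atTop, δ ≤ γ n)
    (h : ∀ n, ‖z n - p‖ ^ 2 ≤ k n * ‖x n - p‖ ^ 2 - γ n * ‖y n - x n‖ ^ 2)
    (hx : Tendsto x atTop (𝓝 q)) (hz : Tendsto z atTop (𝓝 q)) (hk : Tendsto k atTop (𝓝 1)) :
    Tendsto (fun n => y n - x n) atTop (𝓝 0) := by
  refine tendsto_zero_of_mul_norm_sq_le hδ (hγ.mono fun n hn => ?_)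
    (s := fun n => k n * ‖x n - p‖ ^ 2 - ‖z n - p‖ ^ 2) ?_
  · nlinarith [h n, mul_le_mul_of_nonneg_right hn (sq_nonneg ‖y n - x n‖)]
  · simpa using (hk.mul ((hx.sub_const p).norm.pow 2)).sub ((hz.sub_const p).norm.pow 2)

variable [NormedSpace ℝ H]

theorem mul_norm_sub_le_norm_smul_add_one_sub_smul_sub {x y w : H} {a β : ℝ} (ha0 : 0 ≤ a)
    (ha1 : a ≤ 1) (hβ : β ≤ 1) :
    (1 - a) * (1 - β) * ‖w - y‖ ≤ ‖a • x + (1 - a) • (β • y + (1 - β) • w) - x‖ + ‖y - x‖ := by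
  have hdecomp : ((1 - a) * (1 - β)) • (w - y)
      = (a • x + (1 - a) • (β • y + (1 - β) • w) - x) - (1 - a) • (y - x) := by
    module
  have hscale := congrArg norm hdecomp
  rw [norm_smul, Real.norm_of_nonneg (mul_nonneg (sub_nonneg.2 ha1) (sub_nonneg.2 hβ))]
    at hscale
  rw [hscale]
  refine (norm_sub_le _ _).trans (add_le_add_right ?_ _)
  rw [norm_smul, Real.norm_of_nonneg (sub_nonneg.2 ha1)]
  exact mul_le_of_le_one_left (norm_nonneg _) (by linarith)

theorem tendsto_sub_nhds_zero_of_norm_convex_step_le {x y w : ℕ → H} {a β u : ℕ → ℝ} {δ b : ℝ}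
    (hδ : 0 < δ) (haδ : ∀ᶠ n in atTop, δ ≤ 1 - a n) (ha : ∀ n, 0 ≤ a n) (hb : b < 1)
    (hβ : ∀ n, β n ≤ b)
    (hu : ∀ n, ‖a n • x n + (1 - a n) • (β n • y n + (1 - β n) • w n) - x n‖ ≤ u n)
    (hu0 : Tendsto u atTop (𝓝 0)) (hyx : Tendsto (fun n => y n - x n) atTop (𝓝 0)) :
    Tendsto (fun n => w n - y n) atTop (𝓝 0) := by
  refine tendsto_zero_of_mul_norm_le (mul_pos hδ (sub_pos.2 hb)) (haδ.mono fun n hn => ?_)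
    (s := fun n => u n + ‖y n - x n‖) (by simpa using hu0.add hyx.norm)
  have ha1 : a n ≤ 1 := by linarith
  have hstep := mul_norm_sub_le_norm_smul_add_one_sub_smul_sub (x := x n) (y := y n)
    (w := w n) (ha n) ha1 ((hβ n).trans hb.le)
  have hscale : δ * (1 - b) ≤ (1 - a n) * (1 - β n) :=
    mul_le_mul hn (by linarith [hβ n]) (sub_pos.2 hb).le (sub_nonneg.2 ha1)
  linarith [hu n, mul_le_mul_of_nonneg_right hscale (norm_nonneg (w n - y n))]

end Regularity

theorem corollary31_strong_convergence_general
    {H : Type*} [NormedAddCommGroup H] [InnerProductSpace ℝ H] [CompleteSpace H]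
    (C : Set H) (hCcl : IsClosed C) (hCcv : Convex ℝ C)
    (N K M : ℕ)
    -- the bifunctions fᵢ satisfy (A1)-(A4)
    (f : Fin N → H → H → ℝ)
    (hfA1 : ∀ i, ∀ x ∈ C, f i x x = 0)
    (hfA2 : ∀ i, ∀ x ∈ C, ∀ y ∈ C, f i x y + f i y x ≤ 0)
    (hfA3 : ∀ i, ∀ x ∈ C, ∀ y ∈ C, ∀ z ∈ C,
      Filter.limsup (fun t : ℝ => f i (t • z + (1 - t) • x) y) (nhdsWithin 0 (Set.Ioi 0))
        ≤ f i x y)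
    (hfA4conv : ∀ i, ∀ x ∈ C, ConvexOn ℝ C (f i x))
    (hfA4lsc : ∀ i, ∀ x ∈ C, LowerSemicontinuousOn (f i x) C)
    -- the operators Aₖ are α-inverse strongly monotone on C
    (A : Fin K → H → H) (α : ℝ) (hα : 0 < α)
    (hism : ∀ i, ∀ x ∈ C, ∀ y ∈ C, α * ‖A i x - A i y‖ ^ 2 ≤ ⟪A i x - A i y, x - y⟫)
    -- the mappings Sⱼ : C → C are asymptotically κ-strictly pseudocontractive with
    -- the same sequence {kₙ} ⊆ [1,∞), kₙ → 1
    (S : Fin M → H → H) (hS : ∀ j, Set.MapsTo (S j) C C)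
    (κ : ℝ) (hκ0 : 0 ≤ κ) (hκ1 : κ < 1)
    (k : ℕ → ℝ) (hk1 : ∀ n, 1 ≤ k n)
    (hklim : Filter.Tendsto k Filter.atTop (nhds 1))
    (hasym : ∀ j, ∀ n, 1 ≤ n → ∀ x ∈ C, ∀ y ∈ C,
      ‖(S j)^[n] x - (S j)^[n] y‖ ^ 2
        ≤ k n * ‖x - y‖ ^ 2 + κ * ‖(x - (S j)^[n] x) - (y - (S j)^[n] y)‖ ^ 2)
    -- the solution set F is nonempty and bounded by ω
    (F : Set H)
    (hF : F = {v ∈ C | ∀ i, ∀ y ∈ C, 0 ≤ f i v y} ∩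
      {v ∈ C | ∀ i, ∀ y ∈ C, 0 ≤ ⟪A i v, y - v⟫} ∩ {v | ∀ j, S j v = v})
    (hFne : F.Nonempty) (ω : ℝ) (hFb : ∀ v ∈ F, ‖v‖ ≤ ω)
    -- control parameters
    (a : ℕ → ℝ) (ha0 : ∀ n, 0 < a n) (ha1 : ∀ n, a n < 1)
    (halimsup : Filter.limsup a Filter.atTop < 1)
    (β : ℕ → ℝ) (b : ℝ) (hb1 : b < 1) (hβ : ∀ n, κ ≤ β n ∧ β n ≤ b)
    (r : ℕ → ℝ) (d e : ℝ) (hd : 0 < d) (he : e < 2 * α) (hr : ∀ n, d ≤ r n ∧ r n ≤ e)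
    -- the iterates of Algorithm 1
    (x : ℕ → H) (yE : ℕ → Fin N → H) (yV : ℕ → Fin K → H) (z : ℕ → Fin M → H)
    (jM : ℕ → Fin M) (ybar zbar : ℕ → H) (Cset : ℕ → Set H)
    (hx0 : x 0 ∈ C) (hC0 : Cset 0 = C)
    -- (i) yₙⁱ = T_{rₙ}^{fᵢ} xₙ for i = 1,…,N
    (hyE : ∀ n i, yE n i ∈ C ∧ ∀ w ∈ C,
      0 ≤ f i (yE n i) w + (1 / r n) * ⟪w - yE n i, yE n i - x n⟫)
    -- and yₙ^{N+k} = P_C (xₙ - rₙ Aₖ xₙ) for k = 1,…,K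
    (hyV : ∀ n i, IsProjOn C (x n - r n • A i (x n)) (yV n i))
    -- (ii) ȳₙ is the furthest from xₙ among all yₙⁱ, i = 1,…,N+K
    (hybar : ∀ n, ((∃ i, ybar n = yE n i) ∨ (∃ i, ybar n = yV n i)) ∧
      (∀ i, ‖yE n i - x n‖ ≤ ‖ybar n - x n‖) ∧
      (∀ i, ‖yV n i - x n‖ ≤ ‖ybar n - x n‖))
    -- (iii) zₙʲ = αₙ xₙ + (1-αₙ)(βₙ ȳₙ + (1-βₙ) Sⱼⁿ ȳₙ)
    (hz : ∀ n j, z n j = a n • x n +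
      (1 - a n) • (β n • ybar n + (1 - β n) • (S j)^[n] (ybar n)))
    -- (iv) jₙ maximizes ‖zₙʲ - xₙ‖ and z̄ₙ = zₙ^{jₙ}
    (hjM : ∀ n j, ‖z n j - x n‖ ≤ ‖z n (jM n) - x n‖)
    (hzbar : ∀ n, zbar n = z n (jM n))
    -- (v) Cₙ₊₁ = {v ∈ Cₙ : ‖z̄ₙ - v‖² ≤ ‖xₙ - v‖² + εₙ}, εₙ = (kₙ - 1)(‖xₙ‖ + ω)²
    (hCset : ∀ n, Cset (n + 1) =
      {v ∈ Cset n | ‖zbar n - v‖ ^ 2 ≤ ‖x n - v‖ ^ 2 + (k n - 1) * (‖x n‖ + ω) ^ 2})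
    -- (vi) xₙ₊₁ = P_{Cₙ₊₁} x₀
    (hxproj : ∀ n, IsProjOn (Cset (n + 1)) (x 0) (x (n + 1))) :
    ∃ p, IsProjOn F (x 0) p ∧ Filter.Tendsto x Filter.atTop (nhds p) := by
  have hFmem : ∀ p ∈ F, p ∈ C ∧ (∀ i, ∀ y ∈ C, 0 ≤ f i p y) ∧
      (∀ i, ∀ y ∈ C, 0 ≤ ⟪A i p, y - p⟫) ∧ ∀ j, S j p = p := fun p hp => by
    rw [hF] at hp
    exact ⟨hp.1.1.1, hp.1.1.2, hp.1.2.2, hp.2⟩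
  set c := 1 - e / (2 * α)
  have hc0 : 0 < c := sub_pos.2 ((div_lt_one (by linarith)).2 he)
  have hcr : ∀ n, c ≤ 1 - r n / (2 * α) := fun n =>
    sub_le_sub_left (div_le_div_of_nonneg_right (hr n).2 (by linarith)) 1
  have hr0 : ∀ n, 0 < r n := fun n => hd.trans_le (hr n).1
  have hxP : ∀ n, IsProjOn (Cset n) (x 0) (x n)
    | 0 => ⟨hC0 ▸ hx0, fun v _ => by simp⟩
    | n + 1 => hxproj n
  have hanti := antitone_of_succ_eq_sep hCset
  have hxC : ∀ n, x n ∈ C := fun n => hC0 ▸ hanti (Nat.zero_le n) (hxP n).1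
  have hybarC : ∀ n, ybar n ∈ C := fun n => by
    rcases (hybar n).1 with ⟨i, hi⟩ | ⟨i, hi⟩ <;> rw [hi]
    exacts [(hyE n i).1, (hyV n i).1]
  have hybar_le : ∀ p ∈ F, ∀ n, ‖ybar n - p‖ ^ 2 ≤ ‖x n - p‖ ^ 2 - c * ‖ybar n - x n‖ ^ 2 := by
    intro p hp n
    obtain ⟨hpC, hpEP, hpVI, -⟩ := hFmem p hp
    rcases (hybar n).1 with ⟨i, hi⟩ | ⟨i, hi⟩ <;> rw [hi]
    · have := IsResolvent.norm_sub_sq_le (hyE n i) (hr0 n) (hfA2 i) hpC (hpEP i)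
      have hc1 : c ≤ 1 := (hcr n).trans (sub_le_self _ (div_nonneg (hr0 n).le (by positivity)))
      nlinarith [mul_le_mul_of_nonneg_right hc1 (sq_nonneg ‖yE n i - x n‖)]
    · have := (hyV n i).norm_sub_sq_le_of_isInverseStronglyMonotoneOn hCcv (hism i) hα (hr0 n).le
        (hxC n) hpC (hpVI i)
      nlinarith [mul_le_mul_of_nonneg_right (hcr n) (sq_nonneg ‖yV n i - x n‖)]
  have hzbar_le : ∀ p ∈ F, ∀ n,
      ‖zbar n - p‖ ^ 2 ≤ k n * ‖x n - p‖ ^ 2 - (1 - a n) * c * ‖ybar n - x n‖ ^ 2 := by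
    intro p hp n
    rw [hzbar, hz]
    exact norm_smul_add_one_sub_smul_sub_sq_le_sub_of_le (ha0 n).le (ha1 n).le (hk1 n) hc0.le
      (norm_smul_add_one_sub_smul_sub_sq_le_of_pseudocontractive (hk1 n) hκ0 (hβ n).1
        ((hβ n).2.trans hb1.le)
        (IsAsymptoticallyStrictPseudocontractiveOn.norm_iterate_sub_sq_le (hasym (jM n))
          (hFmem p hp).1 ((hFmem p hp).2.2.2 _) (hybarC n) (hk1 n))) (hybar_le p hp n)
  have hFC : ∀ n, F ⊆ Cset n := subset_of_succ_eq_sep hCset (hC0 ▸ fun p hp => (hFmem p hp).1)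
    fun n p hp => norm_sub_sq_le_add_mul_of_le_mul (hk1 n)
      (mul_nonneg (mul_nonneg (sub_nonneg.2 (ha1 n).le) hc0.le) (sq_nonneg _)) (hFb p hp)
      (hzbar_le p hp n)
  obtain ⟨p₀, hp₀⟩ := hFne
  obtain ⟨q, hq⟩ := cauchySeq_tendsto_of_complete (cauchySeq_of_isProjOn_antitone hanti
    (convex_of_succ_eq_sep hCset (hC0 ▸ hCcv)) hxP fun n => hFC n hp₀)
  have hqC : q ∈ C := hCcl.mem_of_tendsto hq (Eventually.of_forall hxC)
  have hε : Tendsto (fun n => (k n - 1) * (‖x n‖ + ω) ^ 2) atTop (𝓝 0) := by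
    simpa using (hklim.sub_const 1).mul ((hq.norm.add_const ω).pow 2)
  have hzq : Tendsto zbar atTop (𝓝 q) := tendsto_of_norm_sub_succ_sq_le hq hε fun n => by
    have hmem := (hxproj n).1
    rw [hCset n] at hmem
    exact hmem.2
  obtain ⟨δ, hδ, haδ⟩ := exists_pos_eventually_le_one_sub halimsup fun n => (ha1 n).le
  have hyx : Tendsto (fun n => ybar n - x n) atTop (𝓝 0) :=
    tendsto_sub_nhds_zero_of_norm_sub_sq_le (mul_pos hδ hc0)
      (haδ.mono fun n hn => mul_le_mul_of_nonneg_right hn hc0.le) (hzbar_le p₀ hp₀) hq hzq hklim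
  have hSreg : ∀ j, Tendsto (fun n => (S j)^[n] (ybar n) - ybar n) atTop (𝓝 0) := fun j =>
    tendsto_sub_nhds_zero_of_norm_convex_step_le hδ haδ (fun n => (ha0 n).le) hb1
      (fun n => (hβ n).2) (fun n => hz n j ▸ hzbar n ▸ hjM n j)
      (by simpa using (hzq.sub hq).norm) hyx
  have hqF : q ∈ F := by
    rw [hF]
    refine ⟨⟨⟨hqC, fun i => ?_⟩, hqC, fun i => ?_⟩, fun j => ?_⟩
    · exact forall_nonneg_of_tendsto_resolvent hCcv (hfA1 i) (hfA2 i) (hfA3 i) (hfA4conv i)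
        (hfA4lsc i) hd (fun n => (hr n).1) (fun n => hyE n i) hqC hq
        (squeeze_zero_norm (fun n => (hybar n).2.1 i) (by simpa using hyx.norm))
    · exact forall_inner_nonneg_of_tendsto_proj hCcv (hism i) hα hd (fun n => (hr n).1)
        (fun n => hyV n i) hxC hqC hq
        (squeeze_zero_norm (fun n => (hybar n).2.2 i) (by simpa using hyx.norm))
    · exact IsAsymptoticallyStrictPseudocontractiveOn.eq_of_tendsto (hasym j) (hS j) hκ0 hκ1
        (fun n => zero_le_one.trans (hk1 n)) hklim.bddAbove_range hybarC hqC
        (hq.of_sub_nhds_zero hyx) (hSreg j)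
  exact ⟨q, isProjOn_of_tendsto hxP hFC hqF hq, hq⟩

/-- **Corollary 3.1.** Parallel hybrid algorithm for a finite family of
equilibrium problems, variational inequalities and asymptotically κ-strictly
pseudocontractive mappings: `{xₙ}` converges strongly to `P_F x₀`. -/
theorem corollary31_strong_convergence
    {H : Type*} [NormedAddCommGroup H] [InnerProductSpace ℝ H] [CompleteSpace H]
    (C : Set H) (hCne : C.Nonempty) (hCcl : IsClosed C) (hCcv : Convex ℝ C)
    (N K M : ℕ) (hN : 0 < N) (hK : 0 < K) (hM : 0 < M)
    -- the bifunctions fᵢ satisfy (A1)-(A4)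
    (f : Fin N → H → H → ℝ)
    (hfA1 : ∀ i, ∀ x ∈ C, f i x x = 0)
    (hfA2 : ∀ i, ∀ x ∈ C, ∀ y ∈ C, f i x y + f i y x ≤ 0)
    (hfA3 : ∀ i, ∀ x ∈ C, ∀ y ∈ C, ∀ z ∈ C,
      Filter.limsup (fun t : ℝ => f i (t • z + (1 - t) • x) y) (nhdsWithin 0 (Set.Ioi 0))
        ≤ f i x y)
    (hfA4conv : ∀ i, ∀ x ∈ C, ConvexOn ℝ C (f i x))
    (hfA4lsc : ∀ i, ∀ x ∈ C, LowerSemicontinuousOn (f i x) C)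
    -- the operators Aₖ are α-inverse strongly monotone on C
    (A : Fin K → H → H) (α : ℝ) (hα : 0 < α)
    (hism : ∀ i, ∀ x ∈ C, ∀ y ∈ C, α * ‖A i x - A i y‖ ^ 2 ≤ ⟪A i x - A i y, x - y⟫)
    -- the mappings Sⱼ : C → C are asymptotically κ-strictly pseudocontractive with
    -- the same sequence {kₙ} ⊆ [1,∞), kₙ → 1
    (S : Fin M → H → H) (hS : ∀ j, Set.MapsTo (S j) C C)
    (κ : ℝ) (hκ0 : 0 ≤ κ) (hκ1 : κ < 1)
    (k : ℕ → ℝ) (hk1 : ∀ n, 1 ≤ k n)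
    (hklim : Filter.Tendsto k Filter.atTop (nhds 1))
    (hasym : ∀ j, ∀ n, 1 ≤ n → ∀ x ∈ C, ∀ y ∈ C,
      ‖(S j)^[n] x - (S j)^[n] y‖ ^ 2
        ≤ k n * ‖x - y‖ ^ 2 + κ * ‖(x - (S j)^[n] x) - (y - (S j)^[n] y)‖ ^ 2)
    -- the solution set F is nonempty and bounded by ω
    (F : Set H)
    (hF : F = {v ∈ C | ∀ i, ∀ y ∈ C, 0 ≤ f i v y} ∩
      {v ∈ C | ∀ i, ∀ y ∈ C, 0 ≤ ⟪A i v, y - v⟫} ∩ {v | ∀ j, S j v = v})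
    (hFne : F.Nonempty) (ω : ℝ) (hω : 0 < ω) (hFb : ∀ v ∈ F, ‖v‖ ≤ ω)
    -- control parameters
    (a : ℕ → ℝ) (ha0 : ∀ n, 0 < a n) (ha1 : ∀ n, a n < 1)
    (halimsup : Filter.limsup a Filter.atTop < 1)
    (β : ℕ → ℝ) (b : ℝ) (hbκ : κ < b) (hb1 : b < 1) (hβ : ∀ n, κ ≤ β n ∧ β n ≤ b)
    (r : ℕ → ℝ) (d e : ℝ) (hd : 0 < d) (he : e < 2 * α) (hr : ∀ n, d ≤ r n ∧ r n ≤ e)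
    -- the iterates of Algorithm 1
    (x : ℕ → H) (yE : ℕ → Fin N → H) (yV : ℕ → Fin K → H) (z : ℕ → Fin M → H)
    (jM : ℕ → Fin M) (ybar zbar : ℕ → H) (Cset : ℕ → Set H)
    (hx0 : x 0 ∈ C) (hC0 : Cset 0 = C)
    -- (i) yₙⁱ = T_{rₙ}^{fᵢ} xₙ for i = 1,…,N
    (hyE : ∀ n i, yE n i ∈ C ∧ ∀ w ∈ C,
      0 ≤ f i (yE n i) w + (1 / r n) * ⟪w - yE n i, yE n i - x n⟫)
    -- and yₙ^{N+k} = P_C (xₙ - rₙ Aₖ xₙ) for k = 1,…,K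
    (hyV : ∀ n i, IsProjOn C (x n - r n • A i (x n)) (yV n i))
    -- (ii) ȳₙ is the furthest from xₙ among all yₙⁱ, i = 1,…,N+K
    (hybar : ∀ n, ((∃ i, ybar n = yE n i) ∨ (∃ i, ybar n = yV n i)) ∧
      (∀ i, ‖yE n i - x n‖ ≤ ‖ybar n - x n‖) ∧
      (∀ i, ‖yV n i - x n‖ ≤ ‖ybar n - x n‖))
    -- (iii) zₙʲ = αₙ xₙ + (1-αₙ)(βₙ ȳₙ + (1-βₙ) Sⱼⁿ ȳₙ)
    (hz : ∀ n j, z n j = a n • x n +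
      (1 - a n) • (β n • ybar n + (1 - β n) • (S j)^[n] (ybar n)))
    -- (iv) jₙ maximizes ‖zₙʲ - xₙ‖ and z̄ₙ = zₙ^{jₙ}
    (hjM : ∀ n j, ‖z n j - x n‖ ≤ ‖z n (jM n) - x n‖)
    (hzbar : ∀ n, zbar n = z n (jM n))
    -- (v) Cₙ₊₁ = {v ∈ Cₙ : ‖z̄ₙ - v‖² ≤ ‖xₙ - v‖² + εₙ}, εₙ = (kₙ - 1)(‖xₙ‖ + ω)²
    (hCset : ∀ n, Cset (n + 1) =
      {v ∈ Cset n | ‖zbar n - v‖ ^ 2 ≤ ‖x n - v‖ ^ 2 + (k n - 1) * (‖x n‖ + ω) ^ 2})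
    -- (vi) xₙ₊₁ = P_{Cₙ₊₁} x₀
    (hxproj : ∀ n, IsProjOn (Cset (n + 1)) (x 0) (x (n + 1))) :
    ∃ p, IsProjOn F (x 0) p ∧ Filter.Tendsto x Filter.atTop (nhds p) :=
  corollary31_strong_convergence_general C hCcl hCcv N K M f hfA1 hfA2 hfA3 hfA4conv hfA4lsc A α hα
    hism S hS κ hκ0 hκ1 k hk1 hklim hasym F hF hFne ω hFb a ha0 ha1 halimsup β b hb1 hβ r d e hd he
    hr x yE yV z jM ybar zbar Cset hx0 hC0 hyE hyV hybar hz hjM hzbar hCset hxproj
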